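/- Let G be an undirected graph with distinct nodes s and t. For every collection P of pairwise edge-disjoint s–t paths in G there exists a balanced arc set F in G⃗ with val(F) = |P|; conversely, for every balanced arc set F in G⃗ there exists a collection of at least val(F) pairwise edge-disjoint s–t paths in G. Consequently, the maximum cardinality of a collection of pairwise edge-disjoint s–t paths in G equals the maximum value of a balanced arc set in G⃗. -/

import Mathlib

/-!
We encode a multigraph on vertex type `V` with edge-index type `E` by a map
`G : E → V × V`: the edge with index `e` joins the (unordered) endpoints
`(G e).1` and `(G e).2`.
-/

/-- The degree of `v` in the multigraph `G`: the number of edge-ends of `G`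
incident to `v` (a loop counts twice). -/
noncomputable def mdeg {V E : Type} (G : E → V × V) (v : V) : ℕ :=
  Set.ncard {p : E × Bool | (cond p.2 (G p.1).1 (G p.1).2) = v}

/-- `mcut G U` is `d_G(U)`: the number of edges of `G` having exactly one
endpoint in `U`. -/
noncomputable def mcut {V E : Type} (G : E → V × V) (U : Set V) : ℕ :=
  Set.ncard {e : E | ((G e).1 ∈ U ∧ (G e).2 ∉ U) ∨ ((G e).2 ∈ U ∧ (G e).1 ∉ U)}

/-- Walks in the multigraph `G`; an edge may be traversed in either direction. -/
inductive MWalk {V E : Type} (G : E → V × V) : V → V → Type where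
  | nil (v : V) : MWalk G v v
  | cons {u v w : V} (e : E) (he : G e = (u, v) ∨ G e = (v, u)) (tail : MWalk G v w) :
      MWalk G u w

namespace MWalk
/-- The list of edges traversed by a walk. -/
def edges {V E : Type} {G : E → V × V} : {u v : V} → MWalk G u v → List E
  | _, _, nil _ => []
  | _, _, cons e _ p => e :: p.edges
end MWalk

/-- An instance `(G, H)` (`H` is the demand multigraph, on the same vertex set)
is feasible if the demand edges can be routed by pairwise edge-disjoint paths
of `G`: for each demand edge `i` there is a walk of `G` connecting its two
endpoints, the walks being pairwise edge-disjoint. -/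
def MFeasible {V E E' : Type} (G : E → V × V) (H : E' → V × V) : Prop :=
  ∃ P : (i : E') → MWalk G (H i).1 (H i).2,
    ∀ i j : E', i ≠ j → List.Disjoint (P i).edges (P j).edges

/-- The multigraph `G` is connected (all of its vertex set lies in one
connected component). -/
def MConnected {V E : Type} (G : E → V × V) : Prop :=
  ∀ u v : V, Nonempty (MWalk G u v)

/-- The subgraph `G[U]` induced by `U` is connected: any two vertices of `U`
are joined by a walk all of whose edges have both endpoints in `U`. -/
def MInducedConnected {V E : Type} (G : E → V × V) (U : Set V) : Prop :=
  ∀ u ∈ U, ∀ v ∈ U, ∃ p : MWalk G u v, ∀ e ∈ p.edges, (G e).1 ∈ U ∧ (G e).2 ∈ U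

/-- The instance `(G, H)` is Eulerian: every vertex of `G + H` has even degree. -/
def MEulerian {V E E' : Type} (G : E → V × V) (H : E' → V × V) : Prop :=
  ∀ v : V, Even (mdeg G v + mdeg H v)

/-!
The digraph `G⃗` associated with the multigraph `G : E → V × V` has the arc set
`E × Bool`: the arc `(e, true)` traverses edge `e` from `(G e).1` to `(G e).2`,
and `(e, false)` is the oppositely directed arc.
-/

/-- The tail of an arc of `G⃗`. -/
def arcTail {V E : Type} (G : E → V × V) (a : E × Bool) : V :=
  cond a.2 (G a.1).1 (G a.1).2

/-- The head of an arc of `G⃗`. -/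
def arcHead {V E : Type} (G : E → V × V) (a : E × Bool) : V :=
  cond a.2 (G a.1).2 (G a.1).1

/-- The reverse arc `a⁻¹`. -/
def arcInv {E : Type} (a : E × Bool) : E × Bool := (a.1, !a.2)

/-- `|F ∩ δ^out(v)|`, the number of arcs of `F` leaving `v`. -/
noncomputable def outCount {V E : Type} (G : E → V × V) (F : Finset (E × Bool)) (v : V) : ℕ :=
  Set.ncard {a : E × Bool | a ∈ F ∧ arcTail G a = v}

/-- `|F ∩ δ^in(v)|`, the number of arcs of `F` entering `v`. -/
noncomputable def inCount {V E : Type} (G : E → V × V) (F : Finset (E × Bool)) (v : V) : ℕ :=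
  Set.ncard {a : E × Bool | a ∈ F ∧ arcHead G a = v}

/-- `F ⊆ AG⃗` is balanced (w.r.t. the source `s` and the sink `t`) if
`|F ∩ δ^in(v)| = |F ∩ δ^out(v)|` for every `v ∈ VG − {s, t}`. -/
def BalancedArcs {V E : Type} (G : E → V × V) (s t : V) (F : Finset (E × Bool)) : Prop :=
  ∀ v : V, v ≠ s → v ≠ t → inCount G F v = outCount G F v

/-- The value `val(F) = |F ∩ δ^out(s)| − |F ∩ δ^in(s)|` of an arc set. -/
noncomputable def bval {V E : Type} (G : E → V × V) (s : V) (F : Finset (E × Bool)) : ℤ :=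
  (outCount G F s : ℤ) - (inCount G F s : ℤ)

/-- Directed walks in `G⃗`. -/
inductive DWalk {V E : Type} (G : E → V × V) : V → V → Type where
  | nil (v : V) : DWalk G v v
  | cons {u v w : V} (a : E × Bool) (ht : arcTail G a = u) (hh : arcHead G a = v)
      (tail : DWalk G v w) : DWalk G u w

namespace DWalk
/-- The list of arcs traversed by a directed walk. -/
def arcs {V E : Type} {G : E → V × V} : {u v : V} → DWalk G u v → List (E × Bool)
  | _, _, nil _ => []
  | _, _, cons a _ _ p => a :: p.arcs
end DWalk

/-- The arcs of the residual digraph `G⃗_F = (VG, (AG⃗ − F) ∪ F⁻¹)`. -/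
def residArcs {E : Type} (F : Finset (E × Bool)) : Set (E × Bool) :=
  {a | a ∉ F ∨ arcInv a ∈ F}
/-!
Orienting the walks of an edge-disjoint family gives arc-disjoint directed trails, and the union
of their arc sets has net outflow `1` per trail at `s` and `0` at every inner vertex. Conversely,
deleting all pairs of opposite arcs from a balanced `F` changes no net outflow and leaves at most
one arc per edge; from the rest, `s`–`t` trails are peeled off greedily (a trail leaving a vertex
of positive net outflow can always be continued until it reaches `t`), one for each unit of value.
-/

section ArcFlow

variable {V E : Type} {G : E → V × V}

@[simp] lemma arcInv_arcInv (a : E × Bool) : arcInv (arcInv a) = a := by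
  simp [arcInv]

lemma arcInv_ne (a : E × Bool) : arcInv a ≠ a := by
  simp [arcInv, Prod.ext_iff]

@[simp] lemma arcTail_arcInv (a : E × Bool) : arcTail G (arcInv a) = arcHead G a := by
  cases a with | mk e b => cases b <;> rfl

@[simp] lemma arcHead_arcInv (a : E × Bool) : arcHead G (arcInv a) = arcTail G a := by
  cases a with | mk e b => cases b <;> rfl

variable [DecidableEq V]

def arcFlow (G : E → V × V) (v : V) (a : E × Bool) : ℤ :=
  (if arcTail G a = v then 1 else 0) - (if arcHead G a = v then 1 else 0)

def netOut (G : E → V × V) (F : Finset (E × Bool)) (v : V) : ℤ :=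
  ∑ a ∈ F, arcFlow G v a

lemma arcFlow_arcInv (v : V) (a : E × Bool) : arcFlow G v (arcInv a) = -arcFlow G v a := by
  simp only [arcFlow, arcTail_arcInv, arcHead_arcInv]
  ring

lemma arcTail_eq_of_arcFlow_pos {v : V} {a : E × Bool} (h : 0 < arcFlow G v a) :
    arcTail G a = v := by
  by_contra hne
  simp only [arcFlow, hne, if_false] at h
  split_ifs at h <;> omega

lemma netOut_eq_outCount_sub_inCount (F : Finset (E × Bool)) (v : V) :
    netOut G F v = outCount G F v - inCount G F v := by
  have ncard_eq (p : E × Bool → Prop) [DecidablePred p] :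
      Set.ncard {a | a ∈ F ∧ p a} = (F.filter p).card := by
    rw [← Set.ncard_coe_finset, Finset.coe_filter]
  simp only [netOut, arcFlow, Finset.sum_sub_distrib, Finset.sum_boole, outCount, inCount,
    ncard_eq]

lemma bval_eq_netOut (s : V) (F : Finset (E × Bool)) : bval G s F = netOut G F s := by
  rw [bval, netOut_eq_outCount_sub_inCount]

lemma balancedArcs_iff_netOut_eq_zero {s t : V} {F : Finset (E × Bool)} :
    BalancedArcs G s t F ↔ ∀ v, v ≠ s → v ≠ t → netOut G F v = 0 := by
  simp only [BalancedArcs, netOut_eq_outCount_sub_inCount, sub_eq_zero, Nat.cast_inj, eq_comm]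

lemma netOut_eq_zero_of_arcInv_mem {S : Finset (E × Bool)} (hS : ∀ a ∈ S, arcInv a ∈ S)
    (v : V) : netOut G S v = 0 :=
  Finset.sum_involution (fun a _ => arcInv a) (fun a _ => by simp [arcFlow_arcInv])
    (fun a _ _ => arcInv_ne a) hS (fun a _ => arcInv_arcInv a)

lemma DWalk.sum_arcFlow {u w : V} (p : DWalk G u w) (v : V) :
    (p.arcs.map (arcFlow G v)).sum = (if u = v then 1 else 0) - (if w = v then 1 else 0) := by
  induction p with
  | nil => simp [DWalk.arcs]
  | cons a ht hh q ih =>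
    subst ht hh
    simp only [DWalk.arcs, List.map_cons, List.sum_cons, ih, arcFlow]
    ring

variable [DecidableEq E]

lemma netOut_filter_arcInv_notMem (F : Finset (E × Bool)) (v : V) :
    netOut G (F.filter fun a => arcInv a ∉ F) v = netOut G F v := by
  have hsymm : netOut G (F.filter fun a => arcInv a ∈ F) v = 0 :=
    netOut_eq_zero_of_arcInv_mem (fun a ha => by simp_all) v
  simp only [netOut] at hsymm ⊢
  rw [← Finset.sum_filter_add_sum_filter_not F (fun a => arcInv a ∈ F), hsymm, zero_add]

lemma netOut_sdiff {S F : Finset (E × Bool)} (h : S ⊆ F) (v : V) :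
    netOut G (F \ S) v = netOut G F v - netOut G S v :=
  Finset.sum_sdiff_eq_sub h

lemma netOut_erase {a : E × Bool} {F : Finset (E × Bool)} (h : a ∈ F) (v : V) :
    netOut G (F.erase a) v = netOut G F v - arcFlow G v a :=
  Finset.sum_erase_eq_sub h

lemma DWalk.netOut_toFinset_arcs {u w : V} (p : DWalk G u w) (hp : p.arcs.Nodup) (v : V) :
    netOut G p.arcs.toFinset v = (if u = v then 1 else 0) - (if w = v then 1 else 0) := by
  rw [netOut, List.sum_toFinset _ hp, p.sum_arcFlow]

lemma netOut_biUnion_arcs {ι : Type} {s t : V} (I : Finset ι) (P : ι → DWalk G s t)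
    (hnd : ∀ i, (P i).arcs.Nodup)
    (hdisj : ∀ i j, i ≠ j → List.Disjoint (P i).arcs (P j).arcs) (v : V) :
    netOut G (I.biUnion fun i => (P i).arcs.toFinset) v
      = I.card * ((if s = v then 1 else 0) - (if t = v then 1 else 0)) := by
  have hpd : (I : Set ι).PairwiseDisjoint fun i => (P i).arcs.toFinset :=
    fun i _ j _ hij => List.disjoint_toFinset_iff_disjoint.mpr (hdisj i j hij)
  rw [netOut, Finset.sum_biUnion hpd]
  calc _ = ∑ i ∈ I, ((if s = v then 1 else 0) - (if t = v then 1 else 0) : ℤ) :=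
        Finset.sum_congr rfl fun i _ => (P i).netOut_toFinset_arcs (hnd i) v
    _ = _ := by rw [Finset.sum_const, nsmul_eq_mul]

theorem exists_dWalk_of_netOut_pos (t : V) (F : Finset (E × Bool)) (u : V)
    (hu : 0 < netOut G F u) (hF : ∀ v, v ≠ u → v ≠ t → 0 ≤ netOut G F v) :
    ∃ p : DWalk G u t, p.arcs.Nodup ∧ ∀ a ∈ p.arcs, a ∈ F := by
  induction F using Finset.strongInduction generalizing u with
  | H F ih =>
  by_cases hut : u = t
  · subst hut
    exact ⟨.nil u, List.nodup_nil, by simp [DWalk.arcs]⟩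
  obtain ⟨a, haF, hau⟩ : ∃ a ∈ F, arcTail G a = u := by
    obtain ⟨a, haF, ha⟩ := Finset.exists_lt_of_sum_lt (f := fun _ => (0 : ℤ))
      (by simpa [netOut] using hu)
    exact ⟨a, haF, arcTail_eq_of_arcFlow_pos ha⟩
  set v := arcHead G a with hv
  by_cases hvt : v = t
  · exact ⟨.cons a hau hvt (.nil t), by simp [DWalk.arcs], by simp [DWalk.arcs, haF]⟩
  have flow_eq (w : V) : arcFlow G w a = (if u = w then 1 else 0) - (if v = w then 1 else 0) := by
    rw [arcFlow, hau]
  obtain ⟨p, hnd, hmem⟩ := ih (F.erase a) (Finset.erase_ssubset haF) v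
    (by
      rw [netOut_erase haF, flow_eq]
      by_cases hvu : v = u
      · simpa only [hvu, if_true, sub_self, sub_zero] using hu
      · have := hF v hvu hvt
        simp only [Ne.symm hvu, if_true, if_false]
        omega)
    (fun w hwv hwt => by
      rw [netOut_erase haF, flow_eq, if_neg (Ne.symm hwv)]
      by_cases hwu : w = u
      · subst hwu; simp only [if_true]; omega
      · simpa [Ne.symm hwu] using hF w hwu hwt)
  refine ⟨.cons a hau hv.symm p, ?_, ?_⟩
  · exact List.nodup_cons.mpr ⟨fun h => Finset.notMem_erase a F (hmem a h), hnd⟩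
  · simp only [DWalk.arcs, List.mem_cons, forall_eq_or_imp]
    exact ⟨haF, fun b hb => Finset.mem_of_mem_erase (hmem b hb)⟩

end ArcFlow

lemma Pairwise.fin_cons {α : Type*} {r : α → α → Prop} (hr : ∀ ⦃x y⦄, r x y → r y x) {n : ℕ}
    {a : α} {f : Fin n → α} (ha : ∀ i, r a (f i)) (hf : Pairwise (Function.onFun r f)) :
    Pairwise (Function.onFun r (Fin.cons a f : Fin (n + 1) → α)) := by
  intro i j hij
  induction i using Fin.cases <;> induction j using Fin.cases
  · exact absurd rfl hij
  · exact ha _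
  · exact hr (ha _)
  · exact hf (fun h => hij (congrArg Fin.succ h))

section Walks

variable {V E : Type} {G : E → V × V}

lemma MWalk.exists_dWalk {u v : V} (p : MWalk G u v) :
    ∃ q : DWalk G u v, q.arcs.map Prod.fst = p.edges := by
  induction p with
  | nil v => exact ⟨.nil v, rfl⟩
  | cons e he p ih =>
    obtain ⟨q, hq⟩ := ih
    rcases he with he | he
    · exact ⟨.cons (e, true) (by simp [arcTail, he]) (by simp [arcHead, he]) q,
        by simp [DWalk.arcs, MWalk.edges, hq]⟩
    · exact ⟨.cons (e, false) (by simp [arcTail, he]) (by simp [arcHead, he]) q,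
        by simp [DWalk.arcs, MWalk.edges, hq]⟩

lemma edge_eq_of_arc {u v : V} {a : E × Bool} (ht : arcTail G a = u) (hh : arcHead G a = v) :
    G a.1 = (u, v) ∨ G a.1 = (v, u) := by
  obtain ⟨e, b⟩ := a
  cases b
  · exact Or.inr (Prod.ext hh ht)
  · exact Or.inl (Prod.ext ht hh)

def DWalk.toMWalk : {u v : V} → DWalk G u v → MWalk G u v
  | _, _, .nil v => .nil v
  | _, _, .cons a ht hh p => .cons a.1 (edge_eq_of_arc ht hh) p.toMWalk

lemma DWalk.edges_toMWalk {u v : V} (p : DWalk G u v) :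
    p.toMWalk.edges = p.arcs.map Prod.fst := by
  induction p with
  | nil => rfl
  | cons a ht hh p ih => simp [DWalk.toMWalk, MWalk.edges, DWalk.arcs, ih]

lemma injOn_fst_filter_arcInv_notMem [DecidableEq E] (F : Finset (E × Bool)) :
    Set.InjOn Prod.fst (↑(F.filter fun a => arcInv a ∉ F) : Set (E × Bool)) := by
  rintro ⟨e, b⟩ ha ⟨e', b'⟩ hb (rfl : e = e')
  simp only [Finset.mem_coe, Finset.mem_filter] at ha hb
  cases b <;> cases b' <;> simp_all [arcInv]

end Walks

section EdgeDisjointPaths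

variable {V E : Type} {G : E → V × V} {s t : V}

theorem exists_balancedArcs_bval_eq_of_edgeDisjoint (hst : s ≠ t) (n : ℕ)
    (P : Fin n → MWalk G s t) (hnd : ∀ i, (P i).edges.Nodup)
    (hdisj : ∀ i j, i ≠ j → List.Disjoint (P i).edges (P j).edges) :
    ∃ F : Finset (E × Bool), BalancedArcs G s t F ∧ bval G s F = n := by
  classical
  choose Q hQ using fun i => (P i).exists_dWalk
  have hQnd (i : Fin n) : (Q i).arcs.Nodup := .of_map Prod.fst (hQ i ▸ hnd i)
  have hQdisj (i j : Fin n) (hij : i ≠ j) : List.Disjoint (Q i).arcs (Q j).arcs :=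
    fun a hai haj => hdisj i j hij (hQ i ▸ List.mem_map_of_mem hai) (hQ j ▸ List.mem_map_of_mem haj)
  have hflow := netOut_biUnion_arcs Finset.univ Q hQnd hQdisj
  refine ⟨Finset.univ.biUnion fun i => (Q i).arcs.toFinset, ?_, ?_⟩
  · rw [balancedArcs_iff_netOut_eq_zero]
    intro v hvs hvt
    simp [hflow, Ne.symm hvs, Ne.symm hvt]
  · simp [bval_eq_netOut, hflow, Ne.symm hst]

theorem exists_dWalks_of_balancedArcs (hst : s ≠ t) (F : Finset (E × Bool))
    (hF : BalancedArcs G s t F) :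
    ∃ (n : ℕ) (P : Fin n → DWalk G s t), (∀ i, (P i).arcs.Nodup) ∧
      (∀ i, ∀ a ∈ (P i).arcs, a ∈ F) ∧
      Pairwise (fun i j => List.Disjoint (P i).arcs (P j).arcs) ∧ bval G s F ≤ n := by
  classical
  induction F using Finset.strongInduction with
  | H F ih =>
  rw [balancedArcs_iff_netOut_eq_zero] at hF
  rw [bval_eq_netOut]
  by_cases hval : netOut G F s ≤ 0
  · exact ⟨0, Fin.elim0, fun i => i.elim0, fun i => i.elim0, fun i => i.elim0, by simpa using hval⟩
  obtain ⟨p, hnd, hmem⟩ := exists_dWalk_of_netOut_pos t F s (not_le.mp hval)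
    (fun v hvs hvt => (hF v hvs hvt).ge)
  have hsub : p.arcs.toFinset ⊆ F := fun a ha => hmem a (List.mem_toFinset.mp ha)
  have hne : p.arcs.toFinset.Nonempty := by
    cases p with
    | nil => exact absurd rfl hst
    | cons a _ _ _ => exact ⟨a, by simp [DWalk.arcs]⟩
  have hflow (v : V) := netOut_sdiff (G := G) hsub v
  obtain ⟨n, Q, hQnd, hQmem, hQdisj, hQval⟩ := ih _ (Finset.sdiff_ssubset hsub hne)
    (by
      rw [balancedArcs_iff_netOut_eq_zero]
      intro v hvs hvt
      simp [hflow, hF v hvs hvt, p.netOut_toFinset_arcs hnd, Ne.symm hvs, Ne.symm hvt])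
  have hp_Q (i : Fin n) : List.Disjoint p.arcs (Q i).arcs := fun a hp hq =>
    (Finset.mem_sdiff.mp (hQmem i a hq)).2 (List.mem_toFinset.mpr hp)
  refine ⟨n + 1, Fin.cons p Q, ?_, ?_, ?_, ?_⟩
  · exact Fin.cases hnd hQnd
  · exact Fin.cases hmem fun i a ha => (Finset.mem_sdiff.mp (hQmem i a ha)).1
  · exact Pairwise.fin_cons (r := fun p q : DWalk G s t => List.Disjoint p.arcs q.arcs)
      (fun _ _ h => h.symm) hp_Q hQdisj
  · rw [bval_eq_netOut, hflow, p.netOut_toFinset_arcs hnd] at hQval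
    simp only [if_true, Ne.symm hst, if_false] at hQval
    push_cast
    omega

theorem exists_edgeDisjoint_of_balancedArcs (hst : s ≠ t) (F : Finset (E × Bool))
    (hF : BalancedArcs G s t F) :
    ∃ (n : ℕ) (P : Fin n → MWalk G s t), (∀ i, (P i).edges.Nodup) ∧
      (∀ i j, i ≠ j → List.Disjoint (P i).edges (P j).edges) ∧ bval G s F ≤ n := by
  classical
  set F₁ := F.filter fun a => arcInv a ∉ F
  have hF₁ : BalancedArcs G s t F₁ := by
    simpa only [balancedArcs_iff_netOut_eq_zero, F₁, netOut_filter_arcInv_notMem] using hF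
  obtain ⟨n, Q, hnd, hmem, hdisj, hval⟩ := exists_dWalks_of_balancedArcs hst F₁ hF₁
  have hinj := injOn_fst_filter_arcInv_notMem F
  refine ⟨n, fun i => (Q i).toMWalk, fun i => ?_, fun i j hij => ?_, ?_⟩
  · rw [DWalk.edges_toMWalk]
    exact (hnd i).map_on fun a ha b hb => hinj (hmem i a ha) (hmem i b hb)
  · simp only [DWalk.edges_toMWalk, List.disjoint_left, List.mem_map]
    rintro _ ⟨a, ha, rfl⟩ ⟨b, hb, hab⟩
    exact hdisj hij ha (hinj (hmem j b hb) (hmem i a ha) hab ▸ hb)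
  · simpa only [bval_eq_netOut, F₁, netOut_filter_arcInv_notMem] using hval

end EdgeDisjointPaths

lemma isGreatest_iff_of_forall_exists_le {A : Set ℕ} {B : Set ℤ} (hAB : ∀ k ∈ A, (k : ℤ) ∈ B)
    (hBA : ∀ z ∈ B, ∃ k ∈ A, z ≤ k) (n : ℕ) : IsGreatest A n ↔ IsGreatest B n := by
  constructor
  · rintro ⟨hn, hmax⟩
    refine ⟨hAB n hn, fun z hz => ?_⟩
    obtain ⟨k, hk, hzk⟩ := hBA z hz
    exact hzk.trans (by exact_mod_cast hmax hk)
  · rintro ⟨hn, hmax⟩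
    have hmaxA : ∀ k ∈ A, k ≤ n := fun k hk => by exact_mod_cast hmax (hAB k hk)
    obtain ⟨k, hk, hnk⟩ := hBA n hn
    have hkn : k = n := le_antisymm (hmaxA k hk) (by exact_mod_cast hnk)
    exact ⟨hkn ▸ hk, hmaxA⟩

theorem statement9_general {V E : Type}
    (G : E → V × V) (s t : V) (hst : s ≠ t) :
    (∀ (n : ℕ) (P : Fin n → MWalk G s t),
        (∀ i, (P i).edges.Nodup) →
        (∀ i j, i ≠ j → List.Disjoint (P i).edges (P j).edges) →
        ∃ F : Finset (E × Bool), BalancedArcs G s t F ∧ bval G s F = n) ∧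
    (∀ F : Finset (E × Bool), BalancedArcs G s t F →
        ∃ (n : ℕ) (P : Fin n → MWalk G s t),
          (∀ i, (P i).edges.Nodup) ∧
          (∀ i j, i ≠ j → List.Disjoint (P i).edges (P j).edges) ∧
          bval G s F ≤ (n : ℤ)) ∧
    (∀ n : ℕ,
      IsGreatest {k : ℕ | ∃ P : Fin k → MWalk G s t,
          (∀ i, (P i).edges.Nodup) ∧
          ∀ i j, i ≠ j → List.Disjoint (P i).edges (P j).edges} n ↔
        IsGreatest {z : ℤ | ∃ F : Finset (E × Bool),
          BalancedArcs G s t F ∧ bval G s F = z} (n : ℤ)) := by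
  have paths_to_arcs := @exists_balancedArcs_bval_eq_of_edgeDisjoint V E G s t hst
  have arcs_to_paths := @exists_edgeDisjoint_of_balancedArcs V E G s t hst
  refine ⟨paths_to_arcs, arcs_to_paths, isGreatest_iff_of_forall_exists_le ?_ ?_⟩
  · rintro k ⟨P, hnd, hdisj⟩
    exact paths_to_arcs k P hnd hdisj
  · rintro z ⟨F, hF, rfl⟩
    obtain ⟨k, P, hnd, hdisj, hle⟩ := arcs_to_paths F hF
    exact ⟨k, ⟨P, hnd, hdisj⟩, hle⟩

/-- For every collection of pairwise edge-disjoint `s`–`t`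
paths in `G` there is a balanced arc set of `G⃗` whose value is the size of the
collection; conversely, every balanced arc set `F` yields at least `val F`
pairwise edge-disjoint `s`–`t` paths in `G`. Consequently, the maximum
cardinality of a collection of pairwise edge-disjoint `s`–`t` paths in `G`
equals the maximum value of a balanced arc set in `G⃗`. -/
theorem statement9 {V E : Type} [Fintype E]
    (G : E → V × V) (s t : V) (hst : s ≠ t) :
    (∀ (n : ℕ) (P : Fin n → MWalk G s t),
        (∀ i, (P i).edges.Nodup) →
        (∀ i j, i ≠ j → List.Disjoint (P i).edges (P j).edges) →
        ∃ F : Finset (E × Bool), BalancedArcs G s t F ∧ bval G s F = n) ∧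
    (∀ F : Finset (E × Bool), BalancedArcs G s t F →
        ∃ (n : ℕ) (P : Fin n → MWalk G s t),
          (∀ i, (P i).edges.Nodup) ∧
          (∀ i j, i ≠ j → List.Disjoint (P i).edges (P j).edges) ∧
          bval G s F ≤ (n : ℤ)) ∧
    (∀ n : ℕ,
      IsGreatest {k : ℕ | ∃ P : Fin k → MWalk G s t,
          (∀ i, (P i).edges.Nodup) ∧
          ∀ i j, i ≠ j → List.Disjoint (P i).edges (P j).edges} n ↔
        IsGreatest {z : ℤ | ∃ F : Finset (E × Bool),
          BalancedArcs G s t F ∧ bval G s F = z} (n : ℤ)) :=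
  statement9_general G s t hst
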